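/- The sequence R_m = Σ_{v ∈ V, |v| < m} L_v·C(U^v), m ∈ ℕ, is a square-integrable martingale with respect to the filtration (A_m)_m, where A_m is the σ-field generated by {U^v : |v| < m}: each R_m is A_m-measurable with E[(R_m)²] < ∞ and E[R_{m+1} | A_m] = R_m almost surely. -/

import Mathlib

/-!
Every summand `L_v·C(U^v)` is bounded by `1`: `L_v ∈ [0,1]`, and `C = 1 - 2·H` with `H` the
binary entropy in nats, `0 ≤ H ≤ ln 2 < 1`. The increment `R_{m+1} - R_m` is the sum of
`L_v·C(U^v)` over `|v| = m`; there `L_v` is `𝒜_m`-measurable and bounded, so it can be pulled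
out of `E[· | 𝒜_m]`, while `U^v` is independent of `𝒜_m`, which leaves the factor
`E[C(U^v)] = ∫₀¹ C = 1 + 4∫₀¹ x ln x = 0`.
-/

open MeasureTheory ProbabilityTheory Filter Finset

noncomputable section

/-- The Quicksort cost function `C(x) = 1 + 2x·ln x + 2(1-x)·ln(1-x)`
(with `Real.log 0 = 0`, encoding the convention `0·ln 0 = 0`). -/
def Cq (x : ℝ) : ℝ := 1 + 2 * x * Real.log x + 2 * (1 - x) * Real.log (1 - x)

/-- Multiplicative path weights on the binary tree `V = {1,2}*` (words over `Bool`,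
where `false` is the letter `1` and `true` is the letter `2`): `Lw U v w` is the
weight `L^v_w` of the path from `v` to `vw`, with `L^v_∅ = 1`,
`L^v_{w1} = L^v_w·U^{vw}` and `L^v_{w2} = L^v_w·(1 − U^{vw})`. -/
def Lw {Ω : Type*} (U : List Bool → Ω → ℝ) : List Bool → List Bool → Ω → ℝ
  | _, [], _ => 1
  | v, b :: w, ω => (if b then 1 - U v ω else U v ω) * Lw U (v ++ [b]) w ω

/-- The partial sums `R^v_m = Σ_{w ∈ V, |w| < m} L^v_w·C(U^{vw})` of the weighted
branching process defining the Quicksort distribution. -/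
def QSsum {Ω : Type*} (U : List Bool → Ω → ℝ) (v : List Bool) (m : ℕ) (ω : Ω) : ℝ :=
  ∑ k ∈ Finset.range m, ∑ w : Fin k → Bool,
    Lw U v (List.ofFn w) ω * Cq (U (v ++ List.ofFn w) ω)

open Real Set
open scoped ENNReal

lemma Cq_eq_one_sub_two_mul_binEntropy (x : ℝ) : Cq x = 1 - 2 * binEntropy x := by
  simp only [Cq, binEntropy, log_inv]; ring

lemma continuous_Cq : Continuous Cq := by
  rw [funext Cq_eq_one_sub_two_mul_binEntropy]; fun_prop

lemma abs_Cq_le_one {x : ℝ} (hx : x ∈ Icc (0 : ℝ) 1) : |Cq x| ≤ 1 := by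
  have h0 := binEntropy_nonneg hx.1 hx.2
  have h1 : binEntropy x < 1 := binEntropy_le_log_two.trans_lt (by linarith [log_two_lt_d9])
  rw [Cq_eq_one_sub_two_mul_binEntropy, abs_le]
  constructor <;> linarith

lemma integral_mul_log_zero_one : ∫ x in (0 : ℝ)..1, x * log x = -1 / 4 := by
  have hF : Continuous fun x : ℝ => x ^ 2 / 2 * log x - x ^ 2 / 4 := by
    have : Continuous fun x : ℝ => x * (x * log x) / 2 - x ^ 2 / 4 := by fun_prop
    convert this using 2 with x
    ring
  rw [intervalIntegral.integral_eq_sub_of_hasDerivAt_of_le zero_le_one hF.continuousOn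
    (fun x hx => ?_) (continuous_mul_log.intervalIntegrable 0 1)]
  · norm_num
  · have hd : HasDerivAt (fun x : ℝ => x ^ 2 / 2 * log x - x ^ 2 / 4)
        (2 * x / 2 * log x + x ^ 2 / 2 * x⁻¹ - 2 * x / 4) x := by
      simpa using (((hasDerivAt_pow 2 x).div_const 2).fun_mul (hasDerivAt_log hx.1.ne')).fun_sub
        ((hasDerivAt_pow 2 x).div_const 4)
    refine hd.congr_deriv ?_
    field_simp [hx.1.ne']
    ring

lemma integral_Cq_zero_one : ∫ x in (0 : ℝ)..1, Cq x = 0 := by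
  have hsymm : ∫ x in (0 : ℝ)..1, (1 - x) * log (1 - x) = ∫ x in (0 : ℝ)..1, x * log x := by
    simpa using intervalIntegral.integral_comp_sub_left (fun x => x * log x) (a := 0) (b := 1) 1
  have hi : IntervalIntegrable (fun x : ℝ => x * log x) volume 0 1 :=
    continuous_mul_log.intervalIntegrable 0 1
  have hi' : IntervalIntegrable (fun x : ℝ => (1 - x) * log (1 - x)) volume 0 1 :=
    (continuous_mul_log.comp (continuous_const.sub continuous_id)).intervalIntegrable 0 1
  simp only [Cq, mul_assoc]
  rw [intervalIntegral.integral_add (intervalIntegrable_const.add (hi.const_mul 2))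
    (hi'.const_mul 2), intervalIntegral.integral_add intervalIntegrable_const (hi.const_mul 2),
    intervalIntegral.integral_const_mul, intervalIntegral.integral_const_mul, hsymm,
    integral_mul_log_zero_one]
  norm_num

theorem condExp_mul_of_indep {Ω : Type*} {m m₁ mΩ : MeasurableSpace Ω} {P : Measure Ω}
    [IsFiniteMeasure P] (hm : m ≤ mΩ) (hm₁ : m₁ ≤ mΩ) {f g : Ω → ℝ} {c : ℝ}
    (hf : StronglyMeasurable[m] f) (hf_bound : ∀ᵐ ω ∂P, ‖f ω‖ ≤ c)
    (hg : StronglyMeasurable[m₁] g) (hg_int : Integrable g P) (hind : Indep m₁ m P) :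
    P[f * g | m] =ᵐ[P] fun ω => f ω * ∫ x, g x ∂P := by
  filter_upwards [condExp_stronglyMeasurable_mul_of_bound hm hf hg_int c hf_bound,
    condExp_indep_eq hm₁ hm hg hind] with ω h1 h2
  rw [h1, Pi.mul_apply, h2]

section Tree

variable {Ω : Type*} (U : List Bool → Ω → ℝ)

abbrev sigmaBelow (m : ℕ) : MeasurableSpace Ω :=
  ⨆ v ∈ {v : List Bool | v.length < m}, MeasurableSpace.comap (U v) (borel ℝ)

def pathTerm (w : List Bool) (ω : Ω) : ℝ := Lw U [] w ω * Cq (U w ω)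

lemma QSsum_nil_succ (m : ℕ) :
    QSsum U [] (m + 1) = QSsum U [] m + ∑ w : Fin m → Bool, pathTerm U (List.ofFn w) := by
  ext ω
  simp only [QSsum, sum_range_succ, Pi.add_apply, Finset.sum_apply, pathTerm, List.nil_append]

lemma measurable_Lw {m : MeasurableSpace Ω} : ∀ (w v : List Bool),
    (∀ p : List Bool, p.length < w.length → Measurable[m] (U (v ++ p))) →
      Measurable[m] (Lw U v w)
  | [], _, _ => measurable_const
  | b :: w, v, h => by
    have hv : Measurable[m] (U v) := by simpa using h [] (by simp)
    have hrec := measurable_Lw w (v ++ [b]) fun p hp => by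
      simpa using h (b :: p) (by simpa using hp)
    cases b
    · exact hv.mul hrec
    · exact (measurable_const.sub hv).mul hrec

lemma Lw_mem_Icc {ω : Ω} (hω : ∀ u, U u ω ∈ Icc (0 : ℝ) 1) :
    ∀ w v, Lw U v w ω ∈ Icc (0 : ℝ) 1
  | [], _ => by simp [Lw]
  | b :: w, v => by
    have hb : (if b then 1 - U v ω else U v ω) ∈ Icc (0 : ℝ) 1 := by
      cases b
      · exact hω v
      · exact Icc.mem_iff_one_sub_mem.mp (hω v)
    exact unitInterval.mul_mem hb (Lw_mem_Icc hω w (v ++ [b]))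

variable {U}

lemma sigmaBelow_le [MeasurableSpace Ω] (hU : ∀ v, Measurable (U v)) (m : ℕ) :
    sigmaBelow U m ≤ ‹MeasurableSpace Ω› :=
  iSup₂_le fun v _ => (hU v).comap_le

lemma measurable_sigmaBelow {v : List Bool} {m : ℕ} (hv : v.length < m) :
    Measurable[sigmaBelow U m] (U v) :=
  Measurable.of_comap_le <| le_iSup₂ (f := fun v (_ : v ∈ {v : List Bool | v.length < m}) =>
    MeasurableSpace.comap (U v) (borel ℝ)) v hv

lemma measurable_pathTerm {w : List Bool} {m : ℕ} (hw : w.length < m) :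
    Measurable[sigmaBelow U m] (pathTerm U w) := by
  refine (measurable_Lw U w [] fun p hp => ?_).mul
    (continuous_Cq.measurable.comp (measurable_sigmaBelow hw))
  exact measurable_sigmaBelow (by simpa using hp.trans hw)

lemma measurable_QSsum (m : ℕ) : Measurable[sigmaBelow U m] (QSsum U [] m) := by
  change Measurable[sigmaBelow U m]
    fun ω => ∑ k ∈ range m, ∑ w : Fin k → Bool, pathTerm U (List.ofFn w) ω
  exact Finset.measurable_sum _ fun k hk => Finset.measurable_sum _ fun w _ =>
    measurable_pathTerm (by simpa using hk)

end Tree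

section Probability

variable {Ω : Type*} [MeasurableSpace Ω] {P : Measure Ω} {U : List Bool → Ω → ℝ}

lemma indep_comap_sigmaBelow (hU : ∀ v, Measurable (U v)) (hind : iIndepFun U P)
    {v : List Bool} {m : ℕ} (hv : m ≤ v.length) :
    Indep (MeasurableSpace.comap (U v) (borel ℝ)) (sigmaBelow U m) P := by
  have h := indep_iSup_of_disjoint (fun i => (hU i).comap_le)
    ((iIndepFun_iff_iIndep _ _ _).mp hind) (S := {v}) (T := {u : List Bool | u.length < m})
    (by simpa using hv)
  rwa [_root_.iSup_singleton] at h

lemma ae_forall_mem_Icc (hU : ∀ v, Measurable (U v))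
    (hunif : ∀ v, P.map (U v) = volume.restrict (Icc (0 : ℝ) 1)) :
    ∀ᵐ ω ∂P, ∀ v, U v ω ∈ Icc (0 : ℝ) 1 :=
  ae_all_iff.mpr fun v => (ae_map_iff (hU v).aemeasurable measurableSet_Icc).mp <| by
    rw [hunif v]; exact ae_restrict_mem measurableSet_Icc

lemma integral_Cq_comp_eq_zero (hU : ∀ v, Measurable (U v))
    (hunif : ∀ v, P.map (U v) = volume.restrict (Icc (0 : ℝ) 1)) (v : List Bool) :
    ∫ ω, Cq (U v ω) ∂P = 0 := by
  rw [← integral_map (hU v).aemeasurable continuous_Cq.aestronglyMeasurable, hunif v,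
    integral_Icc_eq_integral_Ioc, ← intervalIntegral.integral_of_le zero_le_one,
    integral_Cq_zero_one]

lemma ae_norm_pathTerm_le_one (hU01 : ∀ᵐ ω ∂P, ∀ v, U v ω ∈ Icc (0 : ℝ) 1) (w : List Bool) :
    ∀ᵐ ω ∂P, ‖pathTerm U w ω‖ ≤ 1 := by
  filter_upwards [hU01] with ω hω
  have hL := Lw_mem_Icc U hω w []
  rw [pathTerm, norm_mul, Real.norm_of_nonneg hL.1, Real.norm_eq_abs]
  exact mul_le_one₀ hL.2 (abs_nonneg _) (abs_Cq_le_one (hω w))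

lemma memLp_pathTerm [IsFiniteMeasure P] (hU : ∀ v, Measurable (U v))
    (hU01 : ∀ᵐ ω ∂P, ∀ v, U v ω ∈ Icc (0 : ℝ) 1) (p : ℝ≥0∞) (w : List Bool) :
    MemLp (pathTerm U w) p P :=
  MemLp.of_bound ((measurable_pathTerm (Nat.lt_succ_self w.length)).mono
    (sigmaBelow_le hU _) le_rfl).aestronglyMeasurable 1 (ae_norm_pathTerm_le_one hU01 w)

lemma memLp_QSsum [IsFiniteMeasure P] (hU : ∀ v, Measurable (U v))
    (hU01 : ∀ᵐ ω ∂P, ∀ v, U v ω ∈ Icc (0 : ℝ) 1) (p : ℝ≥0∞) (m : ℕ) :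
    MemLp (QSsum U [] m) p P :=
  memLp_finsetSum _ fun _ _ => memLp_finsetSum _ fun _ _ => memLp_pathTerm hU hU01 p _

lemma condExp_pathTerm_eq_zero [IsProbabilityMeasure P] (hU : ∀ v, Measurable (U v))
    (hunif : ∀ v, P.map (U v) = volume.restrict (Icc (0 : ℝ) 1)) (hind : iIndepFun U P)
    {w : List Bool} {m : ℕ} (hw : w.length = m) :
    P[pathTerm U w | sigmaBelow U m] =ᵐ[P] 0 := by
  have hU01 := ae_forall_mem_Icc hU hunif
  have hL : StronglyMeasurable[sigmaBelow U m] (Lw U [] w) :=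
    (measurable_Lw U w [] fun _ hp =>
      measurable_sigmaBelow (by simpa [hw] using hp)).stronglyMeasurable
  have hL_le : ∀ᵐ ω ∂P, ‖Lw U [] w ω‖ ≤ 1 := by
    filter_upwards [hU01] with ω hω
    have hL := Lw_mem_Icc U hω w []
    rw [Real.norm_of_nonneg hL.1]
    exact hL.2
  have hC : StronglyMeasurable[MeasurableSpace.comap (U w) (borel ℝ)] fun ω => Cq (U w ω) :=
    (continuous_Cq.measurable.comp (Measurable.of_comap_le le_rfl)).stronglyMeasurable
  have hC_int : Integrable (fun ω => Cq (U w ω)) P :=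
    memLp_one_iff_integrable.mp <| MemLp.of_bound
      (continuous_Cq.measurable.comp (hU w)).aestronglyMeasurable 1 <| by
        filter_upwards [hU01] with ω hω using abs_Cq_le_one (hω w)
  change P[Lw U [] w * (fun ω => Cq (U w ω)) | sigmaBelow U m] =ᵐ[P] 0
  filter_upwards [condExp_mul_of_indep (sigmaBelow_le hU m) (hU w).comap_le hL hL_le hC hC_int
    (indep_comap_sigmaBelow hU hind hw.ge)] with ω hω
  rw [hω, integral_Cq_comp_eq_zero hU hunif, mul_zero, Pi.zero_apply]

lemma condExp_QSsum_succ [IsProbabilityMeasure P] (hU : ∀ v, Measurable (U v))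
    (hunif : ∀ v, P.map (U v) = volume.restrict (Icc (0 : ℝ) 1)) (hind : iIndepFun U P)
    (m : ℕ) : P[QSsum U [] (m + 1) | sigmaBelow U m] =ᵐ[P] QSsum U [] m := by
  have hU01 := ae_forall_mem_Icc hU hunif
  have hint : ∀ w, Integrable (pathTerm U w) P :=
    fun w => memLp_one_iff_integrable.mp (memLp_pathTerm hU hU01 1 w)
  have hR := memLp_one_iff_integrable.mp (memLp_QSsum hU hU01 1 m)
  rw [QSsum_nil_succ]
  calc P[QSsum U [] m + ∑ w : Fin m → Bool, pathTerm U (List.ofFn w) | sigmaBelow U m]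
      =ᵐ[P] P[QSsum U [] m | sigmaBelow U m]
          + ∑ w : Fin m → Bool, P[pathTerm U (List.ofFn w) | sigmaBelow U m] :=
        (condExp_add hR (integrable_finsetSum' _ fun _ _ => hint _) _).trans
          (EventuallyEq.rfl.add (condExp_finsetSum (fun _ _ => hint _) _))
    _ =ᵐ[P] QSsum U [] m + ∑ _w : Fin m → Bool, 0 := by
        rw [condExp_of_stronglyMeasurable (sigmaBelow_le hU m)
          (measurable_QSsum m).stronglyMeasurable hR]
        exact EventuallyEq.rfl.add (eventuallyEq_sum fun w _ =>
          condExp_pathTerm_eq_zero hU hunif hind (List.length_ofFn))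
    _ = QSsum U [] m := by simp

end Probability

/-- The sequence `R_m = Σ_{|v|<m} L_v·C(U^v)` is a square-integrable
martingale with respect to the filtration `(𝒜_m)_m`, where `𝒜_m` is the σ-field
generated by `{U^v : |v| < m}`: each `R_m` is `𝒜_m`-measurable with `E[(R_m)²] < ∞`,
and `E[R_{m+1} | 𝒜_m] = R_m` almost surely. -/
theorem quicksort_martingale {Ω : Type*} [MeasurableSpace Ω] (P : Measure Ω)
    [IsProbabilityMeasure P] (U : List Bool → Ω → ℝ)
    (hmeas : ∀ v, Measurable (U v))
    (hunif : ∀ v, Measure.map (U v) P = volume.restrict (Set.Icc (0 : ℝ) 1))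
    (hindep : iIndepFun U P) :
    ∀ m : ℕ,
      StronglyMeasurable[⨆ v ∈ {v : List Bool | v.length < m},
          MeasurableSpace.comap (U v) (borel ℝ)]
        (QSsum U ([] : List Bool) m)
      ∧ MeasureTheory.MemLp (QSsum U ([] : List Bool) m) 2 P
      ∧ MeasureTheory.condExp
            (⨆ v ∈ {v : List Bool | v.length < m}, MeasurableSpace.comap (U v) (borel ℝ))
            P (QSsum U ([] : List Bool) (m + 1))
          =ᵐ[P] QSsum U ([] : List Bool) m :=
  fun m => ⟨(measurable_QSsum m).stronglyMeasurable,
    memLp_QSsum hmeas (ae_forall_mem_Icc hmeas hunif) 2 m,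
    condExp_QSsum_succ hmeas hunif hindep m⟩

end
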